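/- Let S ⊆ T ⊆ U be k-algebras with S ⊆ U centralizing, and suppose T = S[𝒳] where (𝒳S)^m = 0 for some positive integer m. Then S and T are growth equivalent. -/

import Mathlib

/-
Every finite-dimensional subspace of `T` lies in `(P + B) ^ d` for finite-dimensional `1 ∈ P ⊆ S`
and `B ⊆ span 𝒳`. Since `U = C_U(S) S`, also `B ⊆ C R` for finite-dimensional `1 ∈ C ⊆ C_U(S)` and
`P ⊆ R ⊆ S`. A product of `N` factors from `P + B`, `j` of them from `B`, lies in `C ^ j R ^ N`
(the factors from `C` commute past those from `S`) and in `S (B S) ^ j`, which vanishes for `j ≥ m`.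
Hence `(P + B) ^ (d n) ⊆ C ^ (m - 1) (R ^ d) ^ n`, so the growth of `T` is at most
`dim C ^ (m - 1)` times that of `S`.
-/

open scoped ENNReal

/-- The `k`-span of all products of at most `n` elements of `X`. -/
def wordSpan (k : Type*) [Field k] (S : Type*) [Ring S] [Algebra k S]
    (X : Set S) (n : ℕ) : Submodule k S :=
  Submodule.span k {x | ∃ l : List S, l.length ≤ n ∧ (∀ a ∈ l, a ∈ X) ∧ l.prod = x}

/-- The growth function `n ↦ dim_k 𝒳⁽ⁿ⁾` of a finite subset of an algebra. -/
noncomputable def growthFn (k : Type*) [Field k] (S : Type*) [Ring S] [Algebra k S]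
    (X : Finset S) (n : ℕ) : ℕ :=
  Module.finrank k (wordSpan k S (X : Set S) n)

/-- The growth relation `S ⪯ T`. -/
def growthLE (k : Type*) [Field k] (S T : Type*) [Ring S] [Algebra k S]
    [Ring T] [Algebra k T] : Prop :=
  ∀ X : Finset S, ∃ (Y : Finset T) (K : ℕ), 0 < K ∧
    ∀ n : ℕ, growthFn k S X n ≤ K * growthFn k T Y n

/-- Growth equivalence `S ≡ T`. -/
def growthEquiv (k : Type*) [Field k] (S T : Type*) [Ring S] [Algebra k S]
    [Ring T] [Algebra k T] : Prop :=
  growthLE k S T ∧ growthLE k T S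

/-- The Gelfand–Kirillov dimension of a `k`-algebra. -/
noncomputable def gkDim (k : Type*) [Field k] (S : Type*) [Ring S] [Algebra k S] : ℝ≥0∞ :=
  ⨆ X : Finset S, Filter.limsup
    (fun n : ℕ => ENNReal.ofReal (Real.log (growthFn k S X n) / Real.log n)) Filter.atTop

open Submodule Module

section Growth

variable {k : Type*} [Field k] {A : Type*} [Ring A] [Algebra k A]

theorem wordSpan_eq_span_pow (X : Set A) (n : ℕ) :
    wordSpan k A X n = span k (insert 1 X) ^ n := by
  induction n with
  | zero =>
    rw [pow_zero, one_eq_span, wordSpan]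
    congr 1
    ext x
    simp [List.length_eq_zero_iff, eq_comm]
  | succ n ih =>
    rw [pow_succ', ← ih, wordSpan, wordSpan, span_mul_span]
    congr 1
    ext x
    constructor
    · rintro ⟨_ | ⟨a, l⟩, hl, hX, rfl⟩
      · exact ⟨1, Set.mem_insert _ _, 1, ⟨[], by simp⟩, one_mul 1⟩
      · refine ⟨a, Or.inr (hX a List.mem_cons_self), l.prod, ⟨l, ?_⟩, List.prod_cons.symm⟩
        exact ⟨by simpa using hl, fun b hb => hX b (List.mem_cons_of_mem a hb), rfl⟩
    · rintro ⟨a, ha, _, ⟨l, hl, hX, rfl⟩, rfl⟩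
      rcases ha with rfl | ha
      · exact ⟨l, hl.trans n.le_succ, hX, (one_mul _).symm⟩
      · refine ⟨a :: l, by simpa using hl, ?_, List.prod_cons⟩
        simpa [ha] using hX

theorem wordSpan_mono {X Y : Set A} {m n : ℕ} (hXY : X ⊆ Y) (hmn : m ≤ n) :
    wordSpan k A X m ≤ wordSpan k A Y n :=
  span_mono fun _ ⟨l, hl, hX, hx⟩ => ⟨l, hl.trans hmn, fun a ha => hXY (hX a ha), hx⟩

theorem wordSpan_mul_wordSpan (X : Set A) (m n : ℕ) :
    wordSpan k A X m * wordSpan k A X n = wordSpan k A X (m + n) := by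
  rw [wordSpan_eq_span_pow, wordSpan_eq_span_pow, wordSpan_eq_span_pow, pow_add]

theorem wordSpan_sup_le_wordSpan_union [DecidableEq A] (X Y : Finset A) (m n : ℕ) :
    wordSpan k A X m ⊔ wordSpan k A Y n ≤ wordSpan k A ↑(X ∪ Y) (max m n) :=
  sup_le (wordSpan_mono (by simp) (le_max_left m n)) (wordSpan_mono (by simp) (le_max_right m n))

theorem map_wordSpan {B : Type*} [Ring B] [Algebra k B] (f : A →ₐ[k] B) (X : Set A) (n : ℕ) :
    (wordSpan k A X n).map f.toLinearMap = wordSpan k B (f '' X) n := by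
  rw [wordSpan_eq_span_pow, wordSpan_eq_span_pow, Submodule.map_pow, map_span,
    Set.image_insert_eq]
  simp

theorem growthFn_image_of_injective {B : Type*} [Ring B] [Algebra k B] [DecidableEq B]
    (f : A →ₐ[k] B) (hf : Function.Injective f) (X : Finset A) (n : ℕ) :
    growthFn k B (X.image f) n = growthFn k A X n := by
  rw [growthFn, growthFn, Finset.coe_image, ← map_wordSpan]
  exact LinearEquiv.finrank_eq (equivMapOfInjective f.toLinearMap hf _).symm

theorem growthFn_eq_finrank_pow (X : Finset A) (n : ℕ) :
    growthFn k A X n = finrank k ↥(span k (insert 1 (X : Set A)) ^ n) := by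
  rw [growthFn, wordSpan_eq_span_pow]

theorem growthLE_of_injective {B : Type*} [Ring B] [Algebra k B] (f : A →ₐ[k] B)
    (hf : Function.Injective f) : growthLE k A B := by
  classical
  exact fun X => ⟨X.image f, 1, one_pos, fun n => by rw [growthFn_image_of_injective f hf, one_mul]⟩

theorem finrank_mul_le (M N : Submodule k A) [Module.Finite k M] [Module.Finite k N] :
    finrank k ↥(M * N) ≤ finrank k M * finrank k N := by
  rw [← Submodule.mulMap_range, ← Module.finrank_tensorProduct]
  exact LinearMap.finrank_range_le _

end Growth

open Subalgebra

section Centralizing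

variable {k : Type*} [Field k] {U : Type*} [Ring U] [Algebra k U]

theorem growthLE_of_forall_fg_le {S T : Subalgebra k U}
    (h : ∀ V : Submodule k U, V.FG → V ≤ toSubmodule T →
      ∃ W G : Submodule k U, W.FG ∧ G.FG ∧ 1 ∈ W ∧ W ≤ toSubmodule S ∧
        ∀ n, V ^ n ≤ G * W ^ n) :
    growthLE k T S := by
  classical
  intro Y
  have hYT : insert 1 (Y.image T.val : Set U) ⊆ T := by
    rw [Finset.coe_image]
    rintro _ (rfl | ⟨y, -, rfl⟩)
    exacts [T.one_mem, y.2]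
  obtain ⟨W, G, ⟨Z, rfl⟩, hG, hW1, hWS, hVGW⟩ :=
    h _ (fg_span ((Y.image T.val).finite_toSet.insert 1)) (span_le.2 hYT)
  have hZ : (Z.subtype (· ∈ S)).image S.val = Z := by
    ext z
    simpa using fun hz => hWS (subset_span hz)
  refine ⟨Z.subtype (· ∈ S), finrank k G + 1, Nat.succ_pos _, fun n => ?_⟩
  rw [← growthFn_image_of_injective T.val Subtype.val_injective,
    ← growthFn_image_of_injective S.val Subtype.val_injective, hZ, growthFn_eq_finrank_pow,
    growthFn_eq_finrank_pow, span_insert_eq_span hW1]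
  have := Module.Finite.iff_fg.2 hG
  have := Module.Finite.iff_fg.2 ((fg_span (R := k) Z.finite_toSet).pow n)
  have := Module.Finite.iff_fg.2 (hG.mul ((fg_span (R := k) Z.finite_toSet).pow n))
  calc _ ≤ finrank k ↥(G * span k (Z : Set U) ^ n) := finrank_mono (hVGW n)
    _ ≤ finrank k G * finrank k ↥(span k (Z : Set U) ^ n) := finrank_mul_le _ _
    _ ≤ _ := Nat.mul_le_mul_right _ (Nat.le_succ _)

theorem exists_finset_mem_wordSpan_of_mem_adjoin {Q : Set U} {x : U}
    (hx : x ∈ Algebra.adjoin k Q) :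
    ∃ Q₀ : Finset U, ↑Q₀ ⊆ Q ∧ ∃ d, x ∈ wordSpan k U Q₀ d := by
  classical
  induction hx using Algebra.adjoin_induction with
  | mem x hx => exact ⟨{x}, by simpa, 1, subset_span ⟨[x], by simp, by simp, by simp⟩⟩
  | algebraMap r =>
    exact ⟨∅, by simp, 0, by rw [wordSpan_eq_span_pow, pow_zero]; exact algebraMap_mem r⟩
  | add x y _ _ hx hy =>
    obtain ⟨Q₁, hQ₁, d₁, hx⟩ := hx
    obtain ⟨Q₂, hQ₂, d₂, hy⟩ := hy
    refine ⟨Q₁ ∪ Q₂, by simp [hQ₁, hQ₂], max d₁ d₂, wordSpan_sup_le_wordSpan_union Q₁ Q₂ d₁ d₂ ?_⟩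
    exact add_mem (mem_sup_left hx) (mem_sup_right hy)
  | mul x y _ _ hx hy =>
    obtain ⟨Q₁, hQ₁, d₁, hx⟩ := hx
    obtain ⟨Q₂, hQ₂, d₂, hy⟩ := hy
    refine ⟨Q₁ ∪ Q₂, by simp [hQ₁, hQ₂], d₁ + d₂, ?_⟩
    rw [← wordSpan_mul_wordSpan]
    exact mul_mem_mul (wordSpan_mono (by simp) le_rfl hx) (wordSpan_mono (by simp) le_rfl hy)

theorem exists_finset_le_wordSpan_of_le_adjoin {Q : Set U} {V : Submodule k U} (hV : V.FG)
    (hVQ : V ≤ toSubmodule (Algebra.adjoin k Q)) :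
    ∃ Q₀ : Finset U, ↑Q₀ ⊆ Q ∧ ∃ d, V ≤ wordSpan k U Q₀ d := by
  classical
  induction V, hV using fg_induction with
  | singleton x =>
    obtain ⟨Q₀, hQ₀, d, hx⟩ :=
      exists_finset_mem_wordSpan_of_mem_adjoin (hVQ (mem_span_singleton_self x))
    exact ⟨Q₀, hQ₀, d, span_singleton_le_iff_mem _ _ |>.2 hx⟩
  | sup V₁ V₂ _ _ ih₁ ih₂ =>
    obtain ⟨Q₁, hQ₁, d₁, hV₁⟩ := ih₁ (le_sup_left.trans hVQ)
    obtain ⟨Q₂, hQ₂, d₂, hV₂⟩ := ih₂ (le_sup_right.trans hVQ)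
    exact ⟨Q₁ ∪ Q₂, by simp [hQ₁, hQ₂], max d₁ d₂,
      (sup_le_sup hV₁ hV₂).trans (wordSpan_sup_le_wordSpan_union Q₁ Q₂ d₁ d₂)⟩

theorem exists_le_sup_pow_of_le_adjoin_union {S : Subalgebra k U} {X : Set U}
    {V : Submodule k U} (hV : V.FG) (hVSX : V ≤ toSubmodule (Algebra.adjoin k (↑S ∪ X))) :
    ∃ P B : Submodule k U, P.FG ∧ B.FG ∧ 1 ∈ P ∧ P ≤ toSubmodule S ∧ B ≤ span k X ∧
      ∃ d, V ≤ (P ⊔ B) ^ d := by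
  obtain ⟨Q, hQ, d, hVQ⟩ := exists_finset_le_wordSpan_of_le_adjoin hV hVSX
  have hQPB : span k (insert 1 (Q : Set U)) ≤ span k (insert 1 (↑Q ∩ S)) ⊔ span k (↑Q ∩ X) := by
    rw [span_le]
    rintro q (rfl | hq)
    · exact mem_sup_left (subset_span (Set.mem_insert _ _))
    · rcases hQ hq with hqS | hqX
      exacts [mem_sup_left (subset_span (Or.inr ⟨hq, hqS⟩)),
        mem_sup_right (subset_span ⟨hq, hqX⟩)]
  refine ⟨_, _, fg_span ((Q.finite_toSet.inter_of_left _).insert 1),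
    fg_span (Q.finite_toSet.inter_of_left X), subset_span (Set.mem_insert _ _),
    span_le.2 (Set.insert_subset S.one_mem Set.inter_subset_right),
    span_mono Set.inter_subset_right, d, ?_⟩
  rw [wordSpan_eq_span_pow] at hVQ
  exact hVQ.trans (pow_le_pow_left' hQPB d)

theorem exists_fg_le_mul_of_le_mul {M N B : Submodule k U} (hB : B.FG) (h : B ≤ M * N) :
    ∃ M₀ N₀ : Submodule k U, M₀.FG ∧ N₀.FG ∧ M₀ ≤ M ∧ N₀ ≤ N ∧ B ≤ M₀ * N₀ := by
  induction B, hB using fg_induction with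
  | singleton x =>
    obtain ⟨T, T', hT, hT', hx⟩ :=
      mem_span_mul_finite_of_mem_mul (h (mem_span_singleton_self x))
    refine ⟨span k T, span k T', fg_span T.finite_toSet, fg_span T'.finite_toSet, span_le.2 hT,
      span_le.2 hT', ?_⟩
    rwa [span_mul_span, span_singleton_le_iff_mem]
  | sup B₁ B₂ _ _ ih₁ ih₂ =>
    obtain ⟨M₁, N₁, hM₁, hN₁, hM₁M, hN₁N, hB₁⟩ := ih₁ (le_sup_left.trans h)
    obtain ⟨M₂, N₂, hM₂, hN₂, hM₂M, hN₂N, hB₂⟩ := ih₂ (le_sup_right.trans h)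
    refine ⟨M₁ ⊔ M₂, N₁ ⊔ N₂, hM₁.sup hM₂, hN₁.sup hN₂, sup_le hM₁M hM₂M, sup_le hN₁N hN₂N, ?_⟩
    exact sup_le (hB₁.trans (mul_le_mul' le_sup_left le_sup_left))
      (hB₂.trans (mul_le_mul' le_sup_right le_sup_right))

theorem span_pow_eq_bot {s : Set U} {m : ℕ}
    (h : ∀ l : List U, l.length = m → (∀ a ∈ l, a ∈ s) → l.prod = 0) : span k s ^ m = ⊥ := by
  rw [span_pow, span_eq_bot]
  intro x hx
  obtain ⟨f, rfl⟩ := Set.mem_pow.1 hx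
  exact h _ (List.length_ofFn) (by simp [List.mem_ofFn])

theorem Subalgebra.toSubmodule_sup_eq_mul_of_commute {A B : Subalgebra k U}
    (h : ∀ a ∈ A, ∀ b ∈ B, Commute a b) :
    toSubmodule (A ⊔ B) = toSubmodule A * toSubmodule B := by
  refine le_antisymm ?_ (mul_toSubmodule_le A B)
  have hBA : toSubmodule B * toSubmodule A = toSubmodule A * toSubmodule B :=
    mul_comm_of_commute fun b hb a ha => (h a ha b hb).symm
  have hmul : toSubmodule A * toSubmodule B * (toSubmodule A * toSubmodule B) =
      toSubmodule A * toSubmodule B := by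
    rw [mul_assoc, ← mul_assoc (toSubmodule B), hBA, ← mul_assoc, ← mul_assoc,
      A.isIdempotentElem_toSubmodule.eq, mul_assoc, B.isIdempotentElem_toSubmodule.eq]
  have hA1 : (1 : U) ∈ toSubmodule A := A.one_mem
  have hB1 : (1 : U) ∈ toSubmodule B := B.one_mem
  let AB := (toSubmodule A * toSubmodule B).toSubalgebra (by simpa using mul_mem_mul hA1 hB1)
    (fun x y hx hy => hmul ▸ mul_mem_mul hx hy)
  have hAB : A ⊔ B ≤ AB := sup_le
    (fun a ha => show a ∈ toSubmodule A * toSubmodule B by simpa using mul_mem_mul ha hB1)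
    (fun b hb => show b ∈ toSubmodule A * toSubmodule B by simpa using mul_mem_mul hA1 hb)
  exact hAB

theorem centralizer_mul_eq_top {S : Subalgebra k U}
    (hcent : Algebra.adjoin k (Set.centralizer (S : Set U) ∪ S) = ⊤) :
    toSubmodule (centralizer k (S : Set U)) * toSubmodule S = ⊤ := by
  rw [Algebra.adjoin_union, ← coe_centralizer k, Algebra.adjoin_eq, Algebra.adjoin_eq] at hcent
  rw [← toSubmodule_sup_eq_mul_of_commute, hcent, Algebra.top_toSubmodule]
  exact fun a ha b hb => (mem_centralizer_iff k |>.1 ha b hb).symm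

theorem mul_comm_of_le_centralizer {S : Subalgebra k U} {M N : Submodule k U}
    (hM : M ≤ toSubmodule S) (hN : N ≤ toSubmodule (centralizer k (S : Set U))) :
    M * N = N * M :=
  mul_comm_of_commute fun m hm _ hn => mem_centralizer_iff k |>.1 (hN hn) m (hM hm)

theorem pow_le_toSubmodule {A : Subalgebra k U} {N : Submodule k U} (h : N ≤ toSubmodule A) :
    ∀ j : ℕ, N ^ j ≤ toSubmodule A
  | 0 => one_le.2 A.one_mem
  | j + 1 => by
    rw [pow_succ, ← A.isIdempotentElem_toSubmodule.eq]
    exact mul_le_mul' (pow_le_toSubmodule h j) h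

theorem sup_pow_le_iSup_inf {S : Subalgebra k U} {P B R C : Submodule k U}
    (hPR : P ≤ R) (hRS : R ≤ toSubmodule S) (hC : C ≤ toSubmodule (centralizer k (S : Set U)))
    (hB : B ≤ C * R) (N : ℕ) :
    (P ⊔ B) ^ N ≤ ⨆ j, toSubmodule S * (B * toSubmodule S) ^ j ⊓ C ^ j * R ^ N := by
  set S' := toSubmodule S
  -- The `j`-th term bounds the products with `j` factors from `B`: as `S (B S) ^ j` for the
  -- nilpotency, and as `C ^ j R ^ N` once the centralizing factors are moved to the left.
  have hCR (j : ℕ) : R * C ^ j = C ^ j * R :=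
    mul_comm_of_le_centralizer hRS (pow_le_toSubmodule hC j)
  induction N with
  | zero => exact le_iSup_of_le 0 (by simpa using one_le.2 S.one_mem)
  | succ N ih =>
    rw [pow_succ']
    refine (mul_le_mul' le_rfl ih).trans ?_
    rw [mul_iSup]
    refine iSup_le fun j => ?_
    rw [Submodule.sup_mul]
    refine sup_le (le_iSup_of_le j (le_inf ?_ ?_)) (le_iSup_of_le (j + 1) (le_inf ?_ ?_))
    · calc _ ≤ S' * S' * (B * S') ^ j := by
            rw [mul_assoc]; exact mul_le_mul' (hPR.trans hRS) inf_le_left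
        _ = _ := by rw [S.isIdempotentElem_toSubmodule.eq]
    · calc _ ≤ R * (C ^ j * R ^ N) := mul_le_mul' hPR inf_le_right
        _ = C ^ j * R ^ (N + 1) := by rw [← mul_assoc, hCR, mul_assoc, pow_succ']
    · calc _ ≤ B * (S' * (B * S') ^ j) := mul_le_mul' le_rfl inf_le_left
        _ = (B * S') ^ (j + 1) := by rw [← mul_assoc, pow_succ']
        _ ≤ S' * (B * S') ^ (j + 1) := le_mul_of_one_le_left' (one_le.2 S.one_mem)
    · calc _ ≤ C * R * (C ^ j * R ^ N) := mul_le_mul' hB inf_le_right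
        _ = C ^ (j + 1) * R ^ (N + 1) := by
          rw [mul_assoc, ← mul_assoc R, hCR, mul_assoc, ← mul_assoc, ← pow_succ', ← pow_succ']

theorem sup_pow_le_of_pow_eq_bot {S : Subalgebra k U} {P B R C : Submodule k U} {m : ℕ}
    (hPR : P ≤ R) (hRS : R ≤ toSubmodule S) (hC : C ≤ toSubmodule (centralizer k (S : Set U)))
    (hB : B ≤ C * R) (hC1 : 1 ∈ C) (hnil : (B * toSubmodule S) ^ m = ⊥) (N : ℕ) :
    (P ⊔ B) ^ N ≤ C ^ (m - 1) * R ^ N := by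
  refine (sup_pow_le_iSup_inf hPR hRS hC hB N).trans (iSup_le fun j => ?_)
  rcases lt_or_ge j m with hj | hj
  · exact inf_le_right.trans (mul_le_mul' (pow_le_pow_right' (one_le.2 hC1) (by omega)) le_rfl)
  · rw [← Nat.add_sub_cancel' hj, pow_add, hnil, bot_mul, mul_bot, bot_inf_eq]
    exact bot_le

theorem span_mul_toSubmodule_pow_eq_bot {S : Subalgebra k U} {X : Set U} {m : ℕ}
    (hnil : ∀ l : List U, l.length = m →
      (∀ a ∈ l, ∃ x ∈ X, ∃ s ∈ S, a = x * s) → l.prod = 0) :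
    (span k X * toSubmodule S) ^ m = ⊥ := by
  rw [← span_eq (toSubmodule S), span_mul_span]
  refine span_pow_eq_bot fun l hl hXS => hnil l hl fun a ha => ?_
  obtain ⟨x, hx, s, hs, rfl⟩ := hXS a ha
  exact ⟨x, hx, s, hs, rfl⟩

end Centralizing

theorem stmt13_general (k : Type*) [Field k] (U : Type*) [Ring U] [Algebra k U]
    (S T : Subalgebra k U) (hST : S ≤ T)
    (hcent : Algebra.adjoin k (Set.centralizer (S : Set U) ∪ (S : Set U)) = ⊤)
    (X : Set U)
    (hT : T = Algebra.adjoin k ((S : Set U) ∪ X))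
    (m : ℕ)
    (hnil : ∀ l : List U, l.length = m →
      (∀ a ∈ l, ∃ x ∈ X, ∃ s ∈ S, a = x * s) → l.prod = 0) :
    growthEquiv k S T := by
  refine ⟨growthLE_of_injective _ (inclusion_injective hST),
    growthLE_of_forall_fg_le fun V hV hVT => ?_⟩
  obtain ⟨P, B, hP, hB, hP1, hPS, hBX, d, hVPB⟩ :=
    exists_le_sup_pow_of_le_adjoin_union hV (hT ▸ hVT)
  obtain ⟨C, R, hC, hR, hCS, hRS, hBCR⟩ :=
    exists_fg_le_mul_of_le_mul hB (le_top.trans (centralizer_mul_eq_top hcent).ge)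
  have hBnil : (B * toSubmodule S) ^ m = ⊥ := eq_bot_iff.2 <|
    (pow_le_pow_left' (mul_le_mul' hBX le_rfl) m).trans (span_mul_toSubmodule_pow_eq_bot hnil).le
  have h1 : (1 : Submodule k U).FG := by rw [one_eq_span]; exact fg_span_singleton 1
  refine ⟨(P ⊔ R) ^ d, (C ⊔ 1) ^ (m - 1), (hP.sup hR).pow d, (hC.sup h1).pow _,
    one_le.1 (one_le_pow_of_one_le' (one_le.2 (mem_sup_left hP1)) d),
    pow_le_toSubmodule (sup_le hPS hRS) d, fun n => ?_⟩
  calc V ^ n ≤ (P ⊔ B) ^ (d * n) := by rw [pow_mul]; exact pow_le_pow_left' hVPB n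
    _ ≤ (C ⊔ 1) ^ (m - 1) * (P ⊔ R) ^ (d * n) :=
      sup_pow_le_of_pow_eq_bot le_sup_left (sup_le hPS hRS)
        (sup_le hCS (one_le.2 (centralizer k _).one_mem))
        (hBCR.trans (mul_le_mul' le_sup_left le_sup_right)) (one_le.1 le_sup_right) hBnil _
    _ = _ := by rw [pow_mul]

/-- Lemma 2.2(b): for a subcentralizing extension `S ⊆ T = S[𝒳] ⊆ U` with `(𝒳S)^m = 0`,
`S` and `T` are growth equivalent. -/
theorem stmt13 (k : Type*) [Field k] (U : Type*) [Ring U] [Algebra k U]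
    (S T : Subalgebra k U) (hST : S ≤ T)
    (hcent : Algebra.adjoin k (Set.centralizer (S : Set U) ∪ (S : Set U)) = ⊤)
    (X : Set U) (hXT : X ⊆ (T : Set U))
    (hT : T = Algebra.adjoin k ((S : Set U) ∪ X))
    (m : ℕ) (hm : 0 < m)
    (hnil : ∀ l : List U, l.length = m →
      (∀ a ∈ l, ∃ x ∈ X, ∃ s ∈ S, a = x * s) → l.prod = 0) :
    growthEquiv k S T :=
  stmt13_general k U S T hST hcent X hT m hnil
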